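/- For all n ≥ 0 and complex x, the (q,r)-Dowling polynomials satisfy D_{m,r,q}(n,x) = ∑_{k=0}^{n} C(n,k) r^{n-k} ∑_{j=0}^{k} m^{k-j} S_q(k,j) x^j, where S_q(k,j) are the q-Stirling numbers of the second kind, assuming m ≠ 0. -/

import Mathlib

open Finset

noncomputable def qint (q : ℂ) (n : ℕ) : ℂ := (q ^ n - 1) / (q - 1)

/-- (q,r)-Whitney numbers of the first kind, via the triangular recurrence
`w(n+1,k) = q^{-n} (w(n,k-1) - (m[n]_q + r) w(n,k))`, with `w(0,0)=1` and
`w(n,k)=0` for `k>n` (the `k<0` values are zero, absorbed in the `k=0` case). -/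
noncomputable def qw (q m r : ℂ) : ℕ → ℕ → ℂ
  | 0, 0 => 1
  | 0, _ + 1 => 0
  | n + 1, 0 => q ^ (-(n : ℤ)) * (0 - (m * qint q n + r) * qw q m r n 0)
  | n + 1, k + 1 => q ^ (-(n : ℤ)) * (qw q m r n k - (m * qint q n + r) * qw q m r n (k + 1))

/-- (q,r)-Whitney numbers of the second kind, via
`W(n+1,k) = q^{k-1} W(n,k-1) + (m[k]_q + r) W(n,k)`, with `W(0,0)=1`. -/
noncomputable def qW (q m r : ℂ) : ℕ → ℕ → ℂ
  | 0, 0 => 1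
  | 0, _ + 1 => 0
  | n + 1, 0 => (m * qint q 0 + r) * qW q m r n 0
  | n + 1, k + 1 => q ^ k * qW q m r n k + (m * qint q (k + 1) + r) * qW q m r n (k + 1)

noncomputable def qDpoly (q m r : ℂ) (n : ℕ) (x : ℂ) : ℂ :=
  ∑ k ∈ Finset.range (n + 1), qW q m r n k * x ^ k

/-! The recurrence coefficient `m[k]_q + r` is homogeneous in `(m, r)`, so
`W_{cm,cr}(n,k) = c^{n-k} W_{m,r}(n,k)`; in particular `W_{m,0}(n,k) = m^{n-k} S_q(n,k)`.
Adding `r` to that coefficient acts as a binomial transform,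
`W_{m,r}(n,k) = ∑ C(n,i) r^{n-i} W_{m,0}(i,k)`, which follows by induction on `n` from
Pascal's rule. Summing against `x^k` gives the identity. -/

lemma qint_zero (q : ℂ) : qint q 0 = 0 := by simp [qint]

lemma qW_succ_zero (q m r : ℂ) (n : ℕ) : qW q m r (n + 1) 0 = r * qW q m r n 0 := by
  rw [qW, qint_zero, mul_zero, zero_add]

lemma qW_succ_succ (q m r : ℂ) (n k : ℕ) :
    qW q m r (n + 1) (k + 1) =
      q ^ k * qW q m r n k + (m * qint q (k + 1) + r) * qW q m r n (k + 1) :=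
  rfl

lemma qW_eq_zero_of_lt (q m r : ℂ) : ∀ {n k : ℕ}, n < k → qW q m r n k = 0
  | 0, _ + 1, _ => rfl
  | _ + 1, _ + 1, h => by
    rw [qW_succ_succ, qW_eq_zero_of_lt q m r (by omega), qW_eq_zero_of_lt q m r (by omega)]
    ring

lemma qW_mul_mul (q c m r : ℂ) : ∀ n k : ℕ,
    qW q (c * m) (c * r) n k = c ^ (n - k) * qW q m r n k
  | 0, 0 => by simp [qW]
  | 0, _ + 1 => by simp [qW]
  | n + 1, 0 => by
    rw [qW_succ_zero, qW_succ_zero, qW_mul_mul q c m r n 0, Nat.sub_zero, Nat.sub_zero]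
    ring
  | n + 1, k + 1 => by
    rw [qW_succ_succ, qW_succ_succ, qW_mul_mul q c m r n k, qW_mul_mul q c m r n (k + 1),
      Nat.add_sub_add_right]
    rcases lt_or_ge n (k + 1) with hlt | hle
    · rw [qW_eq_zero_of_lt q m r hlt]
      ring
    · rw [show n - k = n - (k + 1) + 1 by omega]
      ring

lemma sum_antidiagonal_choose_pow_mul_succ {R : Type*} [CommSemiring R] (r : R) (f : ℕ → R)
    (n : ℕ) :
    ∑ p ∈ antidiagonal (n + 1), ((n + 1).choose p.1 : R) * (r ^ p.2 * f p.1) =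
      r * ∑ p ∈ antidiagonal n, (n.choose p.1 : R) * (r ^ p.2 * f p.1) +
        ∑ p ∈ antidiagonal n, (n.choose p.1 : R) * (r ^ p.2 * f (p.1 + 1)) := by
  rw [sum_antidiagonal_choose_succ_mul (fun i j => r ^ j * f i), mul_sum]
  congr 1
  · exact sum_congr rfl fun p _ => by ring
  · refine sum_congr rfl fun p hp => ?_
    rw [← Nat.choose_symm_of_eq_add (mem_antidiagonal.mp hp).symm]

lemma qW_eq_sum_antidiagonal (q m r : ℂ) (n : ℕ) : ∀ k : ℕ,
    qW q m r n k =
      ∑ p ∈ antidiagonal n, (n.choose p.1 : ℂ) * (r ^ p.2 * qW q m 0 p.1 k) := by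
  induction n with
  | zero => intro k; cases k <;> simp [qW]
  | succ n ih =>
    intro k
    rw [sum_antidiagonal_choose_pow_mul_succ r (fun i => qW q m 0 i k)]
    cases k with
    | zero =>
      simp only [qW_succ_zero, zero_mul, mul_zero, sum_const_zero, add_zero, ← ih]
    | succ k =>
      simp only [qW_succ_succ, add_zero, mul_add, sum_add_distrib, mul_left_comm _ (q ^ k),
        mul_left_comm _ (m * qint q (k + 1)), ← mul_sum, ← ih]
      ring

lemma qDpoly_eq_sum_range_of_le (q m r x : ℂ) {n N : ℕ} (h : n ≤ N) :
    qDpoly q m r n x = ∑ k ∈ range (N + 1), qW q m r n k * x ^ k := by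
  refine sum_subset (range_subset_range.mpr (by omega)) fun k _ hk => ?_
  rw [qW_eq_zero_of_lt q m r (by simpa using hk), zero_mul]

theorem qDpoly_eq_sum_choose_mul_qDpoly_zero (q m r x : ℂ) (n : ℕ) :
    qDpoly q m r n x =
      ∑ k ∈ range (n + 1), (n.choose k : ℂ) * r ^ (n - k) * qDpoly q m 0 k x := by
  calc qDpoly q m r n x
      = ∑ j ∈ range (n + 1), ∑ k ∈ range (n + 1),
          (n.choose k : ℂ) * r ^ (n - k) * (qW q m 0 k j * x ^ j) := by
        refine sum_congr rfl fun j _ => ?_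
        rw [qW_eq_sum_antidiagonal, Nat.sum_antidiagonal_eq_sum_range_succ_mk, sum_mul]
        exact sum_congr rfl fun k _ => by ring
    _ = ∑ k ∈ range (n + 1), (n.choose k : ℂ) * r ^ (n - k) *
          ∑ j ∈ range (n + 1), qW q m 0 k j * x ^ j := by
        rw [sum_comm]
        simp only [mul_sum]
    _ = _ := sum_congr rfl fun k hk => by
        rw [qDpoly_eq_sum_range_of_le q m 0 x (Nat.lt_succ_iff.mp (mem_range.mp hk))]

theorem stmt19_general (q m r x : ℂ) (n : ℕ) :
    qDpoly q m r n x =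
      ∑ k ∈ Finset.range (n + 1), (n.choose k : ℂ) * r ^ (n - k) *
        ∑ j ∈ Finset.range (k + 1), m ^ (k - j) * qW q 1 0 k j * x ^ j := by
  rw [qDpoly_eq_sum_choose_mul_qDpoly_zero]
  refine sum_congr rfl fun k _ => ?_
  rw [qDpoly]
  congr 1
  refine sum_congr rfl fun j _ => ?_
  have hscale : qW q m 0 k j = m ^ (k - j) * qW q 1 0 k j := by
    simpa using qW_mul_mul q m 1 0 k j
  rw [hscale]

theorem stmt19 (q m r x : ℂ) (hq0 : q ≠ 0) (hq1 : q ≠ 1) (hm : m ≠ 0) (n : ℕ) :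
    qDpoly q m r n x =
      ∑ k ∈ Finset.range (n + 1), (n.choose k : ℂ) * r ^ (n - k) *
        ∑ j ∈ Finset.range (k + 1), m ^ (k - j) * qW q 1 0 k j * x ^ j :=
  stmt19_general q m r x n
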